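/- If G and H are graphs with DOM(H + K₁) = DOM(H) + 1, then DOM(G ⊙ H) = DOM(H)·n(G) + DOM(G), where G ⊙ H is the corona of G and H. -/

import Mathlib

open SimpleGraph

variable {V : Type*}

/-- `D` is an orientation of the simple graph `G`: arcs only along edges, and each edge
gets exactly one of its two possible directions. -/
def IsOrientation (G : SimpleGraph V) (D : V → V → Prop) : Prop :=
  (∀ u v, D u v → G.Adj u v) ∧ (∀ u v, G.Adj u v → (D u v ↔ ¬ D v u))

/-- `S` is a dominating set of the digraph `D`. -/
def IsDomSet (D : V → V → Prop) (S : Finset V) : Prop :=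
  ∀ v, v ∉ S → ∃ u ∈ S, D u v

/-- Domination number of a digraph. -/
noncomputable def domNum (D : V → V → Prop) : ℕ :=
  sInf {n | ∃ S : Finset V, S.card = n ∧ IsDomSet D S}

/-- Orientable domination number of a graph. -/
noncomputable def DOM (G : SimpleGraph V) : ℕ :=
  sSup {n | ∃ D : V → V → Prop, IsOrientation G D ∧ domNum D = n}

/-- Independence number. -/
noncomputable def indepNum (G : SimpleGraph V) : ℕ :=
  sSup {n | ∃ S : Finset V, S.card = n ∧ ∀ u ∈ S, ∀ v ∈ S, ¬ G.Adj u v}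

/-- Matching number. -/
noncomputable def matchNum (G : SimpleGraph V) : ℕ :=
  sSup {n | ∃ M : Finset (Sym2 V), M.card = n ∧ (∀ e ∈ M, e ∈ G.edgeSet) ∧
    ∀ e ∈ M, ∀ f ∈ M, e ≠ f → ∀ v, v ∈ e → v ∉ f}

/-- Maximum order of a bipartite induced subgraph. -/
noncomputable def bipNum (G : SimpleGraph V) : ℕ :=
  sSup {n | ∃ s : Finset V, s.card = n ∧ (G.induce (s : Set V)).Colorable 2}

/-- Join of `G` with a single universal vertex (`none`). -/
def joinK1 (G : SimpleGraph V) : SimpleGraph (Option V) :=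
  SimpleGraph.fromRel (fun a b => a = none ∨ ∃ u v, a = some u ∧ b = some v ∧ G.Adj u v)

/-- Lexicographic product `G ∘ H`. -/
def lexProd {W : Type*} (G : SimpleGraph V) (H : SimpleGraph W) : SimpleGraph (V × W) :=
  SimpleGraph.fromRel (fun a b => G.Adj a.1 b.1 ∨ (a.1 = b.1 ∧ H.Adj a.2 b.2))

/-- Corona `G ⊙ H`: vertex `(u, none)` is the vertex `u` of `G`, the vertices `(u, some w)`
form the copy of `H` joined to `u`. -/
def corona {W : Type*} (G : SimpleGraph V) (H : SimpleGraph W) : SimpleGraph (V × Option W) :=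
  SimpleGraph.fromRel (fun a b =>
    (a.2 = none ∧ b.2 = none ∧ G.Adj a.1 b.1) ∨
    (a.1 = b.1 ∧ ∃ w w', a.2 = some w ∧ b.2 = some w' ∧ H.Adj w w') ∨
    (a.1 = b.1 ∧ a.2 = none ∧ b.2 ≠ none))

/-- A digraph is acyclic if it has no directed cycle. -/
def DigraphAcyclic (D : V → V → Prop) : Prop :=
  ¬ ∃ (m : ℕ) (c : ℕ → V), 0 < m ∧ (∀ i < m, D (c i) (c (i + 1))) ∧ c m = c 0

/-- A packing of a digraph: no arc joins two of its vertices and no vertex has two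
out-neighbors in it. -/
def IsPacking (D : V → V → Prop) (P : Finset V) : Prop :=
  (∀ u ∈ P, ∀ v ∈ P, ¬ D u v) ∧
  (∀ u ∈ P, ∀ v ∈ P, u ≠ v → ∀ w, ¬ (D w u ∧ D w v))

/-- Packing number of a digraph. -/
noncomputable def packNum (D : V → V → Prop) : ℕ :=
  sSup {n | ∃ P : Finset V, P.card = n ∧ IsPacking D P}

/-!
Upper bound: an orientation of `G ⊙ H` restricts to an orientation of `G` on the vertices
`(u, none)` and to an orientation of `H` on every copy, and the union of dominating sets of
these restrictions dominates it.

Lower bound: orient `G` optimally and every fiber `{u} × Option W`, a copy of `H + K₁` with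
universal vertex `(u, none)`, by an optimal orientation of `H + K₁`, whose domination number is
`DOM H + 1`. A dominating set meets every fiber in at least `DOM H` vertices, and in at least
`DOM H + 1` at the fibers whose vertex `(u, none)` is dominated from inside the fiber. Those
`u` dominate the orientation of `G`, so there are at least `DOM G` of them.
-/

theorem sum_card_fiber_eq_card {α β : Type*} [Fintype α] [Fintype β]
    [DecidableEq α] [DecidableEq β] (S : Finset (α × β)) :
    ∑ a, (Finset.univ.filter fun b => (a, b) ∈ S).card = S.card := by
  simp only [Finset.card_filter]
  rw [← Fintype.sum_prod_type (fun p => if p ∈ S then 1 else 0), ← Finset.card_filter,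
    Finset.filter_mem_eq_inter, Finset.univ_inter]

section Domination

variable {V' : Type*} {G : SimpleGraph V} {D : V → V → Prop}

theorem exists_isOrientation (G : SimpleGraph V) : ∃ D, IsOrientation G D := by
  refine ⟨fun u v => G.Adj u v ∧ WellOrderingRel u v, fun u v h => h.1, fun u v h => ?_⟩
  constructor
  · rintro ⟨-, huv⟩ ⟨-, hvu⟩
    exact (IsWellFounded.wf (r := @WellOrderingRel V)).asymmetric u v huv hvu
  · intro hvu
    rcases trichotomous_of (@WellOrderingRel V) u v with huv | rfl | huv
    · exact ⟨h, huv⟩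
    · exact absurd h (G.irrefl)
    · exact absurd ⟨h.symm, huv⟩ hvu

theorem IsOrientation.irrefl (hD : IsOrientation G D) (v : V) : ¬ D v v :=
  fun h => G.irrefl (hD.1 v v h)

theorem IsOrientation.comap (hD : IsOrientation G D) (f : V' → V) :
    IsOrientation (G.comap f) (fun x y => D (f x) (f y)) :=
  ⟨fun _ _ h => hD.1 _ _ h, fun _ _ h => hD.2 _ _ h⟩

theorem domNum_le_card {S : Finset V} (hS : IsDomSet D S) : domNum D ≤ S.card :=
  Nat.sInf_le ⟨S, rfl, hS⟩

theorem DOM_le {k : ℕ} (h : ∀ D, IsOrientation G D → domNum D ≤ k) : DOM G ≤ k :=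
  have ⟨D, hD⟩ := exists_isOrientation G
  csSup_le ⟨_, D, hD, rfl⟩ (by rintro n ⟨D, hD, rfl⟩; exact h D hD)

variable [Fintype V]

theorem isDomSet_univ (D : V → V → Prop) : IsDomSet D Finset.univ :=
  fun v hv => absurd (Finset.mem_univ v) hv

theorem exists_isDomSet_card_eq_domNum (D : V → V → Prop) :
    ∃ S : Finset V, S.card = domNum D ∧ IsDomSet D S :=
  Nat.sInf_mem (s := {n | ∃ S : Finset V, S.card = n ∧ IsDomSet D S})
    ⟨_, Finset.univ, rfl, isDomSet_univ D⟩

theorem le_domNum {k : ℕ} (h : ∀ S : Finset V, IsDomSet D S → k ≤ S.card) :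
    k ≤ domNum D := by
  obtain ⟨S, hcard, hS⟩ := exists_isDomSet_card_eq_domNum D
  exact hcard ▸ h S hS

theorem bddAbove_domNum_orientations (G : SimpleGraph V) :
    BddAbove {n | ∃ D : V → V → Prop, IsOrientation G D ∧ domNum D = n} := by
  refine ⟨Fintype.card V, ?_⟩
  rintro n ⟨D, -, rfl⟩
  simpa using domNum_le_card (isDomSet_univ D)

theorem domNum_le_DOM (hD : IsOrientation G D) : domNum D ≤ DOM G :=
  le_csSup (bddAbove_domNum_orientations G) ⟨D, hD, rfl⟩

theorem exists_isOrientation_domNum_eq_DOM (G : SimpleGraph V) :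
    ∃ D, IsOrientation G D ∧ domNum D = DOM G :=
  have ⟨D, hD⟩ := exists_isOrientation G
  Nat.sSup_mem (s := {n | ∃ D : V → V → Prop, IsOrientation G D ∧ domNum D = n})
    ⟨_, D, hD, rfl⟩ (bddAbove_domNum_orientations G)

end Domination

section Corona

variable {W : Type*} {G : SimpleGraph V} {H : SimpleGraph W}

theorem joinK1_adj_some {w w' : W} : (joinK1 H).Adj (some w) (some w') ↔ H.Adj w w' := by
  simp only [joinK1, fromRel_adj]
  aesop (add norm simp SimpleGraph.adj_comm)

theorem corona_adj {u v : V} {a b : Option W} :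
    (corona G H).Adj (u, a) (v, b) ↔
      (a = none ∧ b = none ∧ G.Adj u v) ∨ (u = v ∧ (joinK1 H).Adj a b) := by
  simp only [corona, joinK1, fromRel_adj]
  aesop (add norm simp SimpleGraph.adj_comm)

theorem corona_comap_base : (corona G H).comap (fun u => (u, none)) = G := by
  ext u v
  simp [corona_adj]

theorem corona_comap_fiber (u : V) : (corona G H).comap (fun w => (u, some w)) = H := by
  ext w w'
  simp [corona_adj, joinK1_adj_some]

def coronaDigraph (DG : V → V → Prop) (DJ : Option W → Option W → Prop) :
    V × Option W → V × Option W → Prop :=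
  fun a b => (a.2 = none ∧ b.2 = none ∧ DG a.1 b.1) ∨ (a.1 = b.1 ∧ DJ a.2 b.2)

variable {DG : V → V → Prop} {DJ : Option W → Option W → Prop}

theorem isOrientation_coronaDigraph (hG : IsOrientation G DG) (hJ : IsOrientation (joinK1 H) DJ) :
    IsOrientation (corona G H) (coronaDigraph DG DJ) := by
  have base (u v : V) : coronaDigraph DG DJ (u, none) (v, none) ↔ DG u v := by
    simp [coronaDigraph, hJ.irrefl none]
  have fiber (u : V) (a b : Option W) : coronaDigraph DG DJ (u, a) (u, b) ↔ DJ a b := by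
    simp [coronaDigraph, hG.irrefl u]
  refine ⟨?_, ?_⟩
  · rintro ⟨u, a⟩ ⟨v, b⟩ (⟨rfl, rfl, h⟩ | ⟨rfl, h⟩)
    · exact corona_adj.2 (Or.inl ⟨rfl, rfl, hG.1 _ _ h⟩)
    · exact corona_adj.2 (Or.inr ⟨rfl, hJ.1 _ _ h⟩)
  · rintro ⟨u, a⟩ ⟨v, b⟩ h
    rcases corona_adj.1 h with ⟨rfl, rfl, hadj⟩ | ⟨rfl, hadj⟩
    · rw [base, base]
      exact hG.2 _ _ hadj
    · rw [fiber, fiber]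
      exact hJ.2 _ _ hadj

variable [Fintype V] [Fintype W]

theorem domNum_le_domNum_base_add_sum_domNum_fiber (D : V × Option W → V × Option W → Prop) :
    domNum D ≤ domNum (fun u v => D (u, none) (v, none)) +
      ∑ u, domNum (fun w w' => D (u, some w) (u, some w')) := by
  classical
  obtain ⟨SG, hSG, hSGdom⟩ := exists_isDomSet_card_eq_domNum fun u v => D (u, none) (v, none)
  choose SH hSH hSHdom using fun u =>
    exists_isDomSet_card_eq_domNum fun w w' => D (u, some w) (u, some w')
  let T := SG.image (·, none) ∪ Finset.univ.biUnion fun u => (SH u).image (u, some ·)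
  have hT : IsDomSet D T := by
    rintro ⟨u, _ | w⟩ hp
    · obtain ⟨v, hv, hvu⟩ := hSGdom u (by simpa [T] using hp)
      exact ⟨(v, none), by simp [T, hv], hvu⟩
    · obtain ⟨w', hw', h⟩ := hSHdom u w (by simpa [T] using hp)
      exact ⟨(u, some w'), by simp [T, hw'], h⟩
  calc domNum D ≤ T.card := domNum_le_card hT
    _ ≤ SG.card + ∑ u, (SH u).card :=
      (Finset.card_union_le _ _).trans <| add_le_add Finset.card_image_le <|
        Finset.card_biUnion_le.trans <| Finset.sum_le_sum fun _ _ => Finset.card_image_le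
    _ = _ := by simp only [hSG, hSH]

theorem le_domNum_coronaDigraph {k : ℕ} (hk : k + 1 ≤ domNum DJ) :
    k * Fintype.card V + domNum DG ≤ domNum (coronaDigraph DG DJ) := by
  classical
  refine le_domNum fun S hS => ?_
  let R (u : V) : Finset (Option W) := Finset.univ.filter fun x => (u, x) ∈ S
  let covered (u : V) : Prop := ∃ x ∈ R u, x = none ∨ DJ x none
  have hfiber (u : V) (w : W) (hw : some w ∉ R u) : ∃ x ∈ R u, DJ x (some w) := by
    obtain ⟨⟨v, x⟩, hx, ⟨-, h, -⟩ | ⟨rfl, h⟩⟩ :=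
      hS (u, some w) (by simpa [R] using hw)
    · exact absurd h (Option.some_ne_none w)
    · exact ⟨x, by simpa [R] using hx, h⟩
  have hcovered : IsDomSet DG (Finset.univ.filter covered) := by
    intro u hu
    have covered_of_mem {v : V} {x : Option W} (hx : (v, x) ∈ S) (h : x = none ∨ DJ x none) :
        v ∈ Finset.univ.filter covered :=
      Finset.mem_filter.2 ⟨Finset.mem_univ v, x, by simpa [R] using hx, h⟩
    obtain ⟨⟨v, x⟩, hx, ⟨rfl, -, h⟩ | ⟨rfl, h⟩⟩ :=
      hS (u, none) fun h => hu (covered_of_mem h (Or.inl rfl))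
    · exact ⟨v, covered_of_mem hx (Or.inl rfl), h⟩
    · exact absurd (covered_of_mem hx (Or.inr h)) hu
  have hR (u : V) : k + (if covered u then 1 else 0) ≤ (R u).card := by
    split_ifs with hu
    · refine hk.trans (domNum_le_card fun x hx => ?_)
      cases x with
      | none => obtain ⟨y, hy, rfl | h⟩ := hu; exacts [absurd hy hx, ⟨y, hy, h⟩]
      | some w => exact hfiber u w hx
    · have : IsDomSet DJ (insert none (R u)) := by
        rintro (_ | w) hw
        · simp at hw
        · obtain ⟨x, hx, h⟩ := hfiber u w fun h => hw (Finset.mem_insert_of_mem h)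
          exact ⟨x, Finset.mem_insert_of_mem hx, h⟩
      have := hk.trans ((domNum_le_card this).trans (Finset.card_insert_le _ _))
      omega
  calc k * Fintype.card V + domNum DG
      ≤ ∑ u, (k + if covered u then 1 else 0) := by
        rw [Finset.sum_add_distrib, Finset.sum_const, Finset.sum_boole, Finset.card_univ,
          smul_eq_mul, mul_comm]
        exact Nat.add_le_add_left (by exact_mod_cast domNum_le_card hcovered) _
    _ ≤ ∑ u, (R u).card := Finset.sum_le_sum fun u _ => hR u
    _ = S.card := sum_card_fiber_eq_card S

end Corona

theorem stmt9 {V W : Type*} [Fintype V] [Fintype W]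
    (G : SimpleGraph V) (H : SimpleGraph W)
    (h : DOM (joinK1 H) = DOM H + 1) :
    DOM (corona G H) = DOM H * Fintype.card V + DOM G := by
  refine le_antisymm (DOM_le fun D hD => ?_) ?_
  · refine (domNum_le_domNum_base_add_sum_domNum_fiber D).trans ?_
    have hG := corona_comap_base (H := H) ▸ hD.comap (·, none)
    have hH (u : V) := corona_comap_fiber (G := G) u ▸ hD.comap (u, some ·)
    calc _ ≤ DOM G + ∑ _u : V, DOM H :=
          add_le_add (domNum_le_DOM hG) (Finset.sum_le_sum fun u _ => domNum_le_DOM (hH u))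
      _ = DOM H * Fintype.card V + DOM G := by simp [mul_comm, add_comm]
  · obtain ⟨DG, hDG, hDGval⟩ := exists_isOrientation_domNum_eq_DOM G
    obtain ⟨DJ, hDJ, hDJval⟩ := exists_isOrientation_domNum_eq_DOM (joinK1 H)
    calc DOM H * Fintype.card V + DOM G
        ≤ domNum (coronaDigraph DG DJ) := hDGval ▸ le_domNum_coronaDigraph (by omega)
      _ ≤ DOM (corona G H) := domNum_le_DOM (isOrientation_coronaDigraph hDG hDJ)
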